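/- arXiv:math/9910189 — 3 statements merged into one kernel-verified Lean document; each statement's English description precedes it below -/
import Mathlib

section
/- Let v be a smooth function on an open set D ⊆ (0,∞) × ℝ with v_x ≠ 0 on D, solving v_t = (x/v_x) v_{xx} - 1. Suppose the map Φ(x,t) = (e^{t + v(x,t)/2}, t) is a bijection from D onto an open set D' with smooth inverse. Then the function w defined on D' by w(ξ,τ) = 2(ln x - t), where (x,t) = Φ^{-1}(ξ,τ), satisfies the same equation: w_τ = (ξ/w_ξ) w_{ξξ} - 1 on D' (and w_ξ ≠ 0 on D'). That is, the integrated form of the equation u_t = ∂_x(u_x/u) + u_x/(xu) (with u = v_x/x) is invariant under the point transformation x' = e^{t+v/2}, t' = t, v' = 2(ln x - t). -/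
open Real Set

private lemma clm_eval (L : ℝ × ℝ →L[ℝ] ℝ) (a b : ℝ) :
    L (a, b) = a * L (1, 0) + b * L (0, 1) := by
  have h : ((a, b) : ℝ × ℝ) = a • ((1:ℝ), (0:ℝ)) + b • ((0:ℝ), (1:ℝ)) := by
    simp [Prod.ext_iff]
  rw [h, map_add, map_smul, map_smul, smul_eq_mul, smul_eq_mul]

private lemma slice_fst {f : ℝ × ℝ → ℝ} {L : ℝ × ℝ →L[ℝ] ℝ} {p : ℝ × ℝ}
    (h : HasFDerivAt f L p) : HasDerivAt (fun x => f (x, p.2)) (L (1, 0)) p.1 :=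
  h.comp_hasDerivAt p.1 ((hasDerivAt_id p.1).prodMk (hasDerivAt_const p.1 p.2))

private lemma slice_snd {f : ℝ × ℝ → ℝ} {L : ℝ × ℝ →L[ℝ] ℝ} {p : ℝ × ℝ}
    (h : HasFDerivAt f L p) : HasDerivAt (fun t => f (p.1, t)) (L (0, 1)) p.2 :=
  h.comp_hasDerivAt p.2 ((hasDerivAt_const p.2 p.1).prodMk (hasDerivAt_id p.2))

/-- the integrated form `v_t = (x/v_x) v_{xx} - 1` of the porous
medium equation `u_t = ∂ₓ(uₓ/u) + uₓ/(xu)` (with `u = v_x/x`) is invariant under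
the point transformation `x' = e^{t+v/2}, t' = t, v' = 2(ln x - t)`: if `v` solves
it on `D ⊆ (0,∞) × ℝ` with `v_x ≠ 0`, and `Φ(x,t) = (e^{t+v/2}, t)` is a bijection
of `D` onto the open set `D'` with smooth inverse `Ψ`, then
`w(ξ,τ) = 2(ln x - t)` (with `(x,t) = Ψ(ξ,τ)`) satisfies `w_ξ ≠ 0` and
`w_τ = (ξ/w_ξ) w_{ξξ} - 1` on `D'`. -/
theorem stmt15 (D D' : Set (ℝ × ℝ)) (hD : IsOpen D) (hD' : IsOpen D')
    (hDpos : ∀ p ∈ D, 0 < p.1)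
    (v : ℝ → ℝ → ℝ)
    (hv : ContDiffOn ℝ (⊤ : ℕ∞) (fun p : ℝ × ℝ => v p.1 p.2) D)
    (hvx : ∀ p ∈ D, deriv (fun x => v x p.2) p.1 ≠ 0)
    (hpde : ∀ p ∈ D, deriv (fun t => v p.1 t) p.2 =
      (p.1 / deriv (fun x => v x p.2) p.1) *
        deriv (fun x => deriv (fun x' => v x' p.2) x) p.1 - 1)
    (Ψ : ℝ × ℝ → ℝ × ℝ) (hΨ : ContDiffOn ℝ (⊤ : ℕ∞) Ψ D')
    (hbij : Set.BijOn (fun p : ℝ × ℝ => (exp (p.2 + v p.1 p.2 / 2), p.2)) D D')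
    (hinv : ∀ p ∈ D, Ψ (exp (p.2 + v p.1 p.2 / 2), p.2) = p)
    (w : ℝ → ℝ → ℝ)
    (hw : ∀ q ∈ D', w q.1 q.2 = 2 * (log (Ψ q).1 - (Ψ q).2)) :
    ∀ q ∈ D',
      deriv (fun ξ => w ξ q.2) q.1 ≠ 0 ∧
      deriv (fun τ => w q.1 τ) q.2 =
        (q.1 / deriv (fun ξ => w ξ q.2) q.1) *
          deriv (fun ξ => deriv (fun ξ' => w ξ' q.2) ξ) q.1 - 1 := by
  set f : ℝ × ℝ → ℝ := fun p => v p.1 p.2 with hf_def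
  have hmem : ∀ q ∈ D', Ψ q ∈ D ∧ (Ψ q).2 = q.2 ∧
      exp (q.2 + v (Ψ q).1 q.2 / 2) = q.1 := by
    intro q hq
    obtain ⟨p, hp, hpq⟩ := hbij.surjOn hq
    simp only at hpq
    have h1 : Ψ q = p := by rw [← hpq]; exact hinv p hp
    have h2 : q.2 = p.2 := by rw [← hpq]
    refine ⟨h1 ▸ hp, by rw [h1, h2], ?_⟩
    rw [h1, h2]
    rw [← hpq]
  have hqpos : ∀ q ∈ D', 0 < q.1 := fun q hq => (hmem q hq).2.2 ▸ exp_pos _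
  have hlogid : ∀ q ∈ D', q.2 + v (Ψ q).1 q.2 / 2 = log q.1 := fun q hq => by
    rw [← (hmem q hq).2.2, log_exp]
  have hfD : ∀ p ∈ D, HasFDerivAt f (fderiv ℝ f p) p := fun p hp =>
    ((hv.contDiffAt (hD.mem_nhds hp)).differentiableAt (by simp)).hasFDerivAt
  set g : ℝ × ℝ → ℝ := fun p => fderiv ℝ f p (1, 0) with hg_def
  have hg_eq : ∀ p ∈ D, deriv (fun x => v x p.2) p.1 = g p := fun p hp =>
    (slice_fst (hfD p hp)).deriv
  have hgC : ContDiffOn ℝ (⊤ : ℕ∞) g D :=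
    (hv.fderiv_of_isOpen hD (by simp)).clm_apply contDiffOn_const
  have hgD : ∀ p ∈ D, HasFDerivAt g (fderiv ℝ g p) p := fun p hp =>
    ((hgC.contDiffAt (hD.mem_nhds hp)).differentiableAt (by simp)).hasFDerivAt
  have hvxx_eq : ∀ p ∈ D, deriv (fun x => deriv (fun x' => v x' p.2) x) p.1
      = fderiv ℝ g p (1, 0) := by
    intro p hp
    have hc : ContinuousAt (fun x : ℝ => ((x, p.2) : ℝ × ℝ)) p.1 := by fun_prop
    have hev : (fun x => deriv (fun x' => v x' p.2) x) =ᶠ[nhds p.1] fun x => g (x, p.2) := by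
      filter_upwards [hc.preimage_mem_nhds (hD.mem_nhds hp)] with x hx
      exact hg_eq (x, p.2) hx
    rw [hev.deriv_eq]
    exact (slice_fst (hgD p hp)).deriv
  have hane : ∀ p ∈ D, g p ≠ 0 := fun p hp => hg_eq p hp ▸ hvx p hp
  -- KEY: first derivative facts on D'
  have key : ∀ q ∈ D',
      g (Ψ q) * (fderiv ℝ Ψ q (1, 0)).1 / 2 = (q.1)⁻¹ ∧
      HasDerivAt (fun ξ' => w ξ' q.2) (4 / (q.1 * g (Ψ q) * (Ψ q).1)) q.1 := by
    rintro ⟨ξ, τ⟩ hq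
    obtain ⟨hpD, hsnd, hexp⟩ := hmem (ξ, τ) hq
    have hξpos : 0 < ξ := hqpos (ξ, τ) hq
    have hxpos : 0 < (Ψ (ξ, τ)).1 := hDpos _ hpD
    have ha : g (Ψ (ξ, τ)) ≠ 0 := hane _ hpD
    have hΨq : HasFDerivAt Ψ (fderiv ℝ Ψ (ξ, τ)) (ξ, τ) :=
      ((hΨ.contDiffAt (hD'.mem_nhds hq)).differentiableAt (by simp)).hasFDerivAt
    have hcurve : HasDerivAt (fun ξ' => ((ξ', τ) : ℝ × ℝ)) ((1 : ℝ), (0 : ℝ)) ξ :=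
      (hasDerivAt_id ξ).prodMk (hasDerivAt_const ξ τ)
    have hΨc : HasDerivAt (fun ξ' => Ψ (ξ', τ)) (fderiv ℝ Ψ (ξ, τ) (1, 0)) ξ :=
      hΨq.comp_hasDerivAt ξ hcurve
    have hF : HasDerivAt (fun ξ' => (Ψ (ξ', τ)).1) ((fderiv ℝ Ψ (ξ, τ) (1, 0)).1) ξ :=
      (ContinuousLinearMap.fst ℝ ℝ ℝ).hasFDerivAt.comp_hasDerivAt ξ hΨc
    have hcD' : ContinuousAt (fun ξ' : ℝ => ((ξ', τ) : ℝ × ℝ)) ξ := by fun_prop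
    have heD' : ∀ᶠ ξ' in nhds ξ, ((ξ', τ) : ℝ × ℝ) ∈ D' :=
      hcD'.preimage_mem_nhds (hD'.mem_nhds hq)
    have hid : (fun ξ' => τ + v ((Ψ (ξ', τ)).1) τ / 2) =ᶠ[nhds ξ] log := by
      filter_upwards [heD'] with ξ' h
      exact hlogid (ξ', τ) h
    have hpe : Ψ (ξ, τ) = ((Ψ (ξ, τ)).1, τ) := by
      have h2 : (Ψ (ξ, τ)).2 = τ := hsnd
      exact Prod.ext rfl h2
    have hfp : HasFDerivAt f (fderiv ℝ f (Ψ (ξ, τ))) ((Ψ (ξ, τ)).1, τ) := by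
      rw [← hpe]; exact hfD _ hpD
    have hc2 : HasDerivAt (fun ξ' => (((Ψ (ξ', τ)).1, τ) : ℝ × ℝ))
        (((fderiv ℝ Ψ (ξ, τ) (1, 0)).1, (0 : ℝ))) ξ := hF.prodMk (hasDerivAt_const ξ τ)
    have hchain : HasDerivAt (fun ξ' => τ + v ((Ψ (ξ', τ)).1) τ / 2)
        (fderiv ℝ f (Ψ (ξ, τ)) ((fderiv ℝ Ψ (ξ, τ) (1, 0)).1, 0) / 2) ξ :=
      (((hfp.comp_hasDerivAt ξ hc2)).div_const 2).const_add τ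
    have hlogd : HasDerivAt (fun ξ' => τ + v ((Ψ (ξ', τ)).1) τ / 2) ξ⁻¹ ξ :=
      (Real.hasDerivAt_log hξpos.ne').congr_of_eventuallyEq hid
    have C1' : fderiv ℝ f (Ψ (ξ, τ)) ((fderiv ℝ Ψ (ξ, τ) (1, 0)).1, 0) / 2 = ξ⁻¹ :=
      hchain.unique hlogd
    have C1 : g (Ψ (ξ, τ)) * (fderiv ℝ Ψ (ξ, τ) (1, 0)).1 / 2 = ξ⁻¹ := by
      rw [clm_eval] at C1'
      rw [← C1']; ring_nf; simp only [hg_def]; ring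
    refine ⟨C1, ?_⟩
    have hwev : (fun ξ' => w ξ' τ) =ᶠ[nhds ξ] fun ξ' => 2 * (log ((Ψ (ξ', τ)).1) - τ) := by
      filter_upwards [heD'] with ξ' h
      have h1 := hw (ξ', τ) h
      have h2 := (hmem (ξ', τ) h).2.1
      rw [h1, h2]
    have hwd : HasDerivAt (fun ξ' => 2 * (log ((Ψ (ξ', τ)).1) - τ))
        (2 * ((fderiv ℝ Ψ (ξ, τ) (1, 0)).1 / (Ψ (ξ, τ)).1)) ξ :=
      ((hF.log hxpos.ne').sub_const τ).const_mul 2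
    have hw1 : HasDerivAt (fun ξ' => w ξ' τ)
        (2 * ((fderiv ℝ Ψ (ξ, τ) (1, 0)).1 / (Ψ (ξ, τ)).1)) ξ :=
      hwd.congr_of_eventuallyEq hwev
    convert hw1 using 1
    have hXξ : (fderiv ℝ Ψ (ξ, τ) (1, 0)).1 = 2 / (ξ * g (Ψ (ξ, τ))) := by
      field_simp at C1 ⊢
      linarith [C1]
    rw [hXξ]
    field_simp
    ring
  -- MAIN PART
  rintro ⟨ξ, τ⟩ hq
  obtain ⟨hpD, hsnd, hexp⟩ := hmem (ξ, τ) hq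
  have hξpos : 0 < ξ := hqpos (ξ, τ) hq
  have hxpos : 0 < (Ψ (ξ, τ)).1 := hDpos _ hpD
  have ha : g (Ψ (ξ, τ)) ≠ 0 := hane _ hpD
  obtain ⟨C1, hw1⟩ := key (ξ, τ) hq
  have hΨq : HasFDerivAt Ψ (fderiv ℝ Ψ (ξ, τ)) (ξ, τ) :=
    ((hΨ.contDiffAt (hD'.mem_nhds hq)).differentiableAt (by simp)).hasFDerivAt
  have hcurve : HasDerivAt (fun ξ' => ((ξ', τ) : ℝ × ℝ)) ((1 : ℝ), (0 : ℝ)) ξ :=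
    (hasDerivAt_id ξ).prodMk (hasDerivAt_const ξ τ)
  have hΨc : HasDerivAt (fun ξ' => Ψ (ξ', τ)) (fderiv ℝ Ψ (ξ, τ) (1, 0)) ξ :=
    hΨq.comp_hasDerivAt ξ hcurve
  have hF : HasDerivAt (fun ξ' => (Ψ (ξ', τ)).1) ((fderiv ℝ Ψ (ξ, τ) (1, 0)).1) ξ :=
    (ContinuousLinearMap.fst ℝ ℝ ℝ).hasFDerivAt.comp_hasDerivAt ξ hΨc
  have hcD' : ContinuousAt (fun ξ' : ℝ => ((ξ', τ) : ℝ × ℝ)) ξ := by fun_prop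
  have heD' : ∀ᶠ ξ' in nhds ξ, ((ξ', τ) : ℝ × ℝ) ∈ D' :=
    hcD'.preimage_mem_nhds (hD'.mem_nhds hq)
  -- (Ψ'(1,0)).2 = 0
  have he0 : ((fderiv ℝ Ψ (ξ, τ)) (1, 0)).2 = 0 := by
    have hev : (fun q' => (Ψ q').2) =ᶠ[nhds ((ξ, τ) : ℝ × ℝ)] (fun q' : ℝ × ℝ => q'.2) := by
      filter_upwards [hD'.mem_nhds hq] with q' h
      exact (hmem q' h).2.1
    have h1 : HasFDerivAt (fun q' : ℝ × ℝ => q'.2)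
        (ContinuousLinearMap.snd ℝ ℝ ℝ) ((ξ, τ) : ℝ × ℝ) := hasFDerivAt_snd
    have h2 : HasFDerivAt (fun q' => (Ψ q').2)
        (ContinuousLinearMap.snd ℝ ℝ ℝ) ((ξ, τ) : ℝ × ℝ) :=
      h1.congr_of_eventuallyEq hev
    have h3 : HasFDerivAt (fun q' => (Ψ q').2)
        ((ContinuousLinearMap.snd ℝ ℝ ℝ).comp (fderiv ℝ Ψ (ξ, τ))) ((ξ, τ) : ℝ × ℝ) :=
      (ContinuousLinearMap.snd ℝ ℝ ℝ).hasFDerivAt.comp (ξ, τ) hΨq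
    have h4 := h3.unique h2
    have h5 := congrArg (fun L : ℝ × ℝ →L[ℝ] ℝ => L (1, 0)) h4
    simpa using h5
  -- second derivative of w in ξ
  have hev2 : (fun ξ' => deriv (fun ξ'' => w ξ'' τ) ξ') =ᶠ[nhds ξ]
      fun ξ' => 4 / (ξ' * g (Ψ (ξ', τ)) * (Ψ (ξ', τ)).1) := by
    filter_upwards [heD'] with ξ' h
    exact ((key (ξ', τ) h).2).deriv
  have hG : HasDerivAt (fun ξ' => g (Ψ (ξ', τ)))
      (fderiv ℝ g (Ψ (ξ, τ)) (fderiv ℝ Ψ (ξ, τ) (1, 0))) ξ :=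
    by have := (hgD _ hpD).comp_hasDerivAt ξ hΨc; exact this
  have hGval : fderiv ℝ g (Ψ (ξ, τ)) (fderiv ℝ Ψ (ξ, τ) (1, 0))
      = (fderiv ℝ Ψ (ξ, τ) (1, 0)).1 * fderiv ℝ g (Ψ (ξ, τ)) (1, 0) := by
    have h6 : (fderiv ℝ Ψ (ξ, τ)) (1, 0)
        = (((fderiv ℝ Ψ (ξ, τ) (1, 0)).1, (fderiv ℝ Ψ (ξ, τ) (1, 0)).2) : ℝ × ℝ) := rfl
    rw [h6, he0, clm_eval]
    simp
  rw [hGval] at hG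
  have hune : ξ * g (Ψ (ξ, τ)) * (Ψ (ξ, τ)).1 ≠ 0 :=
    mul_ne_zero (mul_ne_zero hξpos.ne' ha) hxpos.ne'
  have hu : HasDerivAt (fun ξ' => ξ' * g (Ψ (ξ', τ)) * (Ψ (ξ', τ)).1)
      ((1 * g (Ψ (ξ, τ)) + ξ * ((fderiv ℝ Ψ (ξ, τ) (1, 0)).1 * fderiv ℝ g (Ψ (ξ, τ)) (1, 0)))
        * (Ψ (ξ, τ)).1 + ξ * g (Ψ (ξ, τ)) * (fderiv ℝ Ψ (ξ, τ) (1, 0)).1) ξ :=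
    ((hasDerivAt_id ξ).mul hG).mul hF
  have hψ : HasDerivAt (fun ξ' => 4 / (ξ' * g (Ψ (ξ', τ)) * (Ψ (ξ', τ)).1))
      ((0 * (ξ * g (Ψ (ξ, τ)) * (Ψ (ξ, τ)).1) - 4 *
        ((1 * g (Ψ (ξ, τ)) + ξ * ((fderiv ℝ Ψ (ξ, τ) (1, 0)).1 * fderiv ℝ g (Ψ (ξ, τ)) (1, 0)))
          * (Ψ (ξ, τ)).1 + ξ * g (Ψ (ξ, τ)) * (fderiv ℝ Ψ (ξ, τ) (1, 0)).1))
        / (ξ * g (Ψ (ξ, τ)) * (Ψ (ξ, τ)).1) ^ 2) ξ :=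
    (hasDerivAt_const ξ 4).div hu hune
  -- w_τ
  have hτcurve : HasDerivAt (fun τ' => ((ξ, τ') : ℝ × ℝ)) ((0 : ℝ), (1 : ℝ)) τ :=
    (hasDerivAt_const τ ξ).prodMk (hasDerivAt_id τ)
  have hΨcτ : HasDerivAt (fun τ' => Ψ (ξ, τ')) (fderiv ℝ Ψ (ξ, τ) (0, 1)) τ :=
    hΨq.comp_hasDerivAt τ hτcurve
  have hFτ : HasDerivAt (fun τ' => (Ψ (ξ, τ')).1) ((fderiv ℝ Ψ (ξ, τ) (0, 1)).1) τ :=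
    (ContinuousLinearMap.fst ℝ ℝ ℝ).hasFDerivAt.comp_hasDerivAt τ hΨcτ
  have hcτ : ContinuousAt (fun τ' : ℝ => ((ξ, τ') : ℝ × ℝ)) τ := by fun_prop
  have heτ : ∀ᶠ τ' in nhds τ, ((ξ, τ') : ℝ × ℝ) ∈ D' :=
    hcτ.preimage_mem_nhds (hD'.mem_nhds hq)
  have hwevτ : (fun τ' => w ξ τ') =ᶠ[nhds τ]
      fun τ' => 2 * (log ((Ψ (ξ, τ')).1) - τ') := by
    filter_upwards [heτ] with τ' h
    have h1 := hw (ξ, τ') h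
    have h2 := (hmem (ξ, τ') h).2.1
    rw [h1, h2]
  have hwdτ : HasDerivAt (fun τ' => 2 * (log ((Ψ (ξ, τ')).1) - τ'))
      (2 * ((fderiv ℝ Ψ (ξ, τ) (0, 1)).1 / (Ψ (ξ, τ)).1 - 1)) τ :=
    ((hFτ.log hxpos.ne').sub (hasDerivAt_id τ)).const_mul 2
  have hwτ : HasDerivAt (fun τ' => w ξ τ')
      (2 * ((fderiv ℝ Ψ (ξ, τ) (0, 1)).1 / (Ψ (ξ, τ)).1 - 1)) τ :=
    hwdτ.congr_of_eventuallyEq hwevτ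
  -- τ-identity
  have hpe : Ψ (ξ, τ) = ((Ψ (ξ, τ)).1, τ) := by
    have h2 : (Ψ (ξ, τ)).2 = τ := hsnd
    exact Prod.ext rfl h2
  have hfp : HasFDerivAt f (fderiv ℝ f (Ψ (ξ, τ))) ((Ψ (ξ, τ)).1, τ) := by
    rw [← hpe]; exact hfD _ hpD
  have hidτ : (fun τ' => τ' + v ((Ψ (ξ, τ')).1) τ' / 2) =ᶠ[nhds τ]
      fun _ => log ξ := by
    filter_upwards [heτ] with τ' h
    exact hlogid (ξ, τ') h
  have hc3 : HasDerivAt (fun τ' => (((Ψ (ξ, τ')).1, τ') : ℝ × ℝ))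
      (((fderiv ℝ Ψ (ξ, τ) (0, 1)).1, (1 : ℝ))) τ := hFτ.prodMk (hasDerivAt_id τ)
  have hcomp : HasDerivAt (fun τ' => f (((Ψ (ξ, τ')).1, τ') : ℝ × ℝ))
      (fderiv ℝ f (Ψ (ξ, τ)) ((fderiv ℝ Ψ (ξ, τ) (0, 1)).1, 1)) τ :=
    hfp.comp_hasDerivAt_of_eq τ hc3 rfl
  have hchainτ : HasDerivAt (fun τ' => τ' + v ((Ψ (ξ, τ')).1) τ' / 2)
      (1 + fderiv ℝ f (Ψ (ξ, τ)) ((fderiv ℝ Ψ (ξ, τ) (0, 1)).1, 1) / 2) τ :=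
    (hasDerivAt_id τ).add (hcomp.div_const 2)
  have hconstτ : HasDerivAt (fun τ' => τ' + v ((Ψ (ξ, τ')).1) τ' / 2) 0 τ :=
    (hasDerivAt_const τ (log ξ)).congr_of_eventuallyEq hidτ
  have C2' : 1 + fderiv ℝ f (Ψ (ξ, τ)) ((fderiv ℝ Ψ (ξ, τ) (0, 1)).1, 1) / 2 = 0 :=
    hchainτ.unique hconstτ
  have C2 : 1 + ((fderiv ℝ Ψ (ξ, τ) (0, 1)).1 * g (Ψ (ξ, τ))
      + fderiv ℝ f (Ψ (ξ, τ)) (0, 1)) / 2 = 0 := by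
    rw [clm_eval] at C2'
    have hgp : (fderiv ℝ f (Ψ (ξ, τ))) (1, 0) = g (Ψ (ξ, τ)) := rfl
    rw [hgp, one_mul] at C2'
    exact C2'
  -- pde at p
  have hvt : deriv (fun t => v (Ψ (ξ, τ)).1 t) (Ψ (ξ, τ)).2
      = fderiv ℝ f (Ψ (ξ, τ)) (0, 1) := (slice_snd (hfD _ hpD)).deriv
  have hpde' : fderiv ℝ f (Ψ (ξ, τ)) (0, 1)
      = (Ψ (ξ, τ)).1 / g (Ψ (ξ, τ)) * fderiv ℝ g (Ψ (ξ, τ)) (1, 0) - 1 := by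
    have h := hpde _ hpD
    rw [hvt, hg_eq _ hpD, hvxx_eq _ hpD] at h
    exact h
  -- conclude
  have hwξ : deriv (fun ξ' => w ξ' τ) ξ = 4 / (ξ * g (Ψ (ξ, τ)) * (Ψ (ξ, τ)).1) := hw1.deriv
  constructor
  · rw [hwξ]
    exact div_ne_zero (by norm_num) hune
  · rw [hwξ, hwτ.deriv, hev2.deriv_eq, hψ.deriv]
    set a := g (Ψ (ξ, τ)) with ha_def
    set x := (Ψ (ξ, τ)).1 with hx_def
    set b := fderiv ℝ g (Ψ (ξ, τ)) (1, 0) with hb_def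
    set Xξ := (fderiv ℝ Ψ (ξ, τ) (1, 0)).1 with hXξ_def
    set Xτ := (fderiv ℝ Ψ (ξ, τ) (0, 1)).1 with hXτ_def
    set vt := fderiv ℝ f (Ψ (ξ, τ)) (0, 1) with hvt_def
    have hXξv : Xξ = 2 / (ξ * a) := by
      field_simp at C1 ⊢
      linarith [C1]
    have hXτv : Xτ = (-2 - vt) / a := by
      field_simp at C2 ⊢
      linarith [C2]
    rw [hXξv, hXτv, hpde']
    field_simp
    ring
end

section
/- Define T(x,u,v) = (-x/v^2, u v^3/(2x^2 u - v), 1/v) on the set {(x,u,v) ∈ ℝ^3 : v ≠ 0 and 2x^2 u - v ≠ 0}. Then T maps this set into itself (i.e. at the image point the new v-coordinate is nonzero and the new combination 2x'^2 u' - v' is nonzero), and T is an involution: T(T(x,u,v)) = (x,u,v). Hence the point transformation x' = -x/v^2, t' = t, u' = u v^3/(2x^2u - v), v' = 1/v, which maps the potential system v_x = xu, v_t = x u^{-2} u_x + (3/2) u^{-1} into itself, forms a cyclic group of order 2. -/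
/-- The algebraic map `T(x,u,v) = (-x/v², uv³/(2x²u - v), 1/v)` underlying the
point transformation `x' = -x/v², t' = t, u' = uv³/(2x²u - v), v' = 1/v` of the
potential system `v_x = xu, v_t = x u⁻² u_x + (3/2) u⁻¹`. -/
noncomputable def Tpot : ℝ × ℝ × ℝ → ℝ × ℝ × ℝ :=
  fun p => (-p.1 / p.2.2 ^ 2,
    p.2.1 * p.2.2 ^ 3 / (2 * p.1 ^ 2 * p.2.1 - p.2.2),
    p.2.2⁻¹)

/-! `T` inverts both `v` and the denominator `2x²u - v`; with these two reciprocities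
the three coordinates of `T (T p)` collapse back to those of `p`. -/

theorem Tpot_denom_eq_inv (x u v : ℝ) (hv : v ≠ 0) (hD : 2 * x ^ 2 * u - v ≠ 0) :
    2 * (Tpot (x, u, v)).1 ^ 2 * (Tpot (x, u, v)).2.1 - (Tpot (x, u, v)).2.2
      = (2 * x ^ 2 * u - v)⁻¹ := by
  simp only [Tpot]
  field_simp
  ring

theorem Tpot_Tpot (x u v : ℝ) (hv : v ≠ 0) (hD : 2 * x ^ 2 * u - v ≠ 0) :
    Tpot (Tpot (x, u, v)) = (x, u, v) := by
  have hD' := Tpot_denom_eq_inv x u v hv hD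
  simp only [Tpot] at hD' ⊢
  rw [hD']
  ext
  · field_simp
  · field_simp
    exact mul_div_cancel_right₀ u (by convert hD using 2; ring)
  · exact inv_inv v

/-- `T` maps the set `{(x,u,v) : v ≠ 0, 2x²u - v ≠ 0}` into itself
and is an involution there; hence the point transformation `x' = -x/v², t' = t,
u' = uv³/(2x²u - v), v' = 1/v` forms a cyclic group of order 2. -/
theorem stmt16 :
    ∀ x u v : ℝ, v ≠ 0 → 2 * x ^ 2 * u - v ≠ 0 →
      (Tpot (x, u, v)).2.2 ≠ 0 ∧
      2 * (Tpot (x, u, v)).1 ^ 2 * (Tpot (x, u, v)).2.1 - (Tpot (x, u, v)).2.2 ≠ 0 ∧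
      Tpot (Tpot (x, u, v)) = (x, u, v) :=
  fun x u v hv hD =>
    ⟨inv_ne_zero hv, Tpot_denom_eq_inv x u v hv hD ▸ inv_ne_zero hD, Tpot_Tpot x u v hv hD⟩
end

section
/- Let c ≠ 0 and let (u,v) be a smooth pair on an open set D ⊆ (0,∞) × ℝ, with u > 0, solving the system v_x = x u and v_t = (x/u) u_x. Suppose the map Φ(x,t) = (v(x,t) + 2t, t) is a bijection from D onto an open set D' with smooth inverse. Define, for (ξ,τ) ∈ D' with (x,t) = Φ^{-1}(ξ,τ): u'(ξ,τ) = c/(u x^2) + 1 and v'(ξ,τ) = v + 2t + c ln x, with u, v evaluated at (x,t). Then on D' the pair (u',v') satisfies v'_ξ = u' and v'_τ = (c/(u' - 1)) u'_ξ; that is, u' solves the nonlinear diffusion equation u'_τ = ∂_ξ( (c/(u'-1)) u'_ξ ) in potential form. -/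
open Real Set

private lemma stmt17_alg (c X U W : ℝ) (hX : X ≠ 0) (hU : U ≠ 0) (hc : c ≠ 0) :
    c * (X⁻¹ * (-(X / U * W + 2) / (X * U))) =
    c * (U * X ^ 2) / c *
      (c * -((U * X ^ 2) ^ 2)⁻¹ *
        (U * (2 * X * (1 / (X * U))) + X ^ 2 * (1 / (X * U) * W))) := by
  field_simp
  ring

/-- if `(u,v)` solves the potential system `v_x = xu`,
`v_t = (x/u) u_x` on `D ⊆ (0,∞) × ℝ`, `c ≠ 0`, and `Φ(x,t) = (v + 2t, t)` is a
bijection of `D` onto the open set `D'` with smooth inverse `Ψ`, then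
`u' = c/(ux²) + 1`, `v' = v + 2t + c ln x` (composed with `Ψ`) satisfy
`v'_ξ = u'` and `v'_τ = (c/(u'-1)) u'_ξ` on `D'`, the potential form of the
nonlinear diffusion equation `u'_τ = ∂_ξ((c/(u'-1)) u'_ξ)`. -/
theorem stmt17 (c : ℝ) (hc : c ≠ 0) (D D' : Set (ℝ × ℝ))
    (hD : IsOpen D) (hD' : IsOpen D')
    (hDpos : ∀ p ∈ D, 0 < p.1)
    (u v : ℝ → ℝ → ℝ)
    (hu : ContDiffOn ℝ (⊤ : ℕ∞) (fun p : ℝ × ℝ => u p.1 p.2) D)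
    (hv : ContDiffOn ℝ (⊤ : ℕ∞) (fun p : ℝ × ℝ => v p.1 p.2) D)
    (hupos : ∀ p ∈ D, 0 < u p.1 p.2)
    (hsys1 : ∀ p ∈ D, deriv (fun x => v x p.2) p.1 = p.1 * u p.1 p.2)
    (hsys2 : ∀ p ∈ D, deriv (fun t => v p.1 t) p.2 =
      (p.1 / u p.1 p.2) * deriv (fun x => u x p.2) p.1)
    (Ψ : ℝ × ℝ → ℝ × ℝ) (hΨ : ContDiffOn ℝ (⊤ : ℕ∞) Ψ D')
    (hbij : Set.BijOn (fun p : ℝ × ℝ => (v p.1 p.2 + 2 * p.2, p.2)) D D')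
    (hinv : ∀ p ∈ D, Ψ (v p.1 p.2 + 2 * p.2, p.2) = p)
    (u' v' : ℝ → ℝ → ℝ)
    (hu' : ∀ q ∈ D', u' q.1 q.2 =
      c / (u (Ψ q).1 (Ψ q).2 * (Ψ q).1 ^ 2) + 1)
    (hv' : ∀ q ∈ D', v' q.1 q.2 =
      v (Ψ q).1 (Ψ q).2 + 2 * (Ψ q).2 + c * log (Ψ q).1) :
    ∀ q ∈ D',
      deriv (fun ξ => v' ξ q.2) q.1 = u' q.1 q.2 ∧
      deriv (fun τ => v' q.1 τ) q.2 =
        (c / (u' q.1 q.2 - 1)) * deriv (fun ξ => u' ξ q.2) q.1 := by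
  -- basic facts about `Ψ` on `D'`
  have hkey : ∀ q' ∈ D', Ψ q' ∈ D ∧ (Ψ q').2 = q'.2 ∧
      v (Ψ q').1 (Ψ q').2 + 2 * (Ψ q').2 = q'.1 := by
    intro q' hq'
    obtain ⟨p', hp', hΦ⟩ := hbij.surjOn hq'
    have hΨq' : Ψ q' = p' := by rw [← hΦ]; exact hinv p' hp'
    refine ⟨hΨq' ▸ hp', ?_, ?_⟩
    · rw [hΨq', ← hΦ]
    · rw [hΨq', ← hΦ]
  intro q hq
  obtain ⟨hp, hq2, -⟩ := hkey q hq
  set p := Ψ q with hpdef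
  have hx : 0 < p.1 := hDpos p hp
  have hx0 : p.1 ≠ 0 := ne_of_gt hx
  have hU : 0 < u p.1 p.2 := hupos p hp
  have hU0 : u p.1 p.2 ≠ 0 := ne_of_gt hU
  have hmemD : D ∈ nhds p := hD.mem_nhds hp
  have hmemD' : D' ∈ nhds q := hD'.mem_nhds hq
  have hvD : DifferentiableAt ℝ (fun r : ℝ × ℝ => v r.1 r.2) p :=
    (hv.contDiffAt hmemD).differentiableAt (by simp)
  have huD : DifferentiableAt ℝ (fun r : ℝ × ℝ => u r.1 r.2) p :=
    (hu.contDiffAt hmemD).differentiableAt (by simp)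
  have hΨD : DifferentiableAt ℝ Ψ q :=
    (hΨ.contDiffAt hmemD').differentiableAt (by simp)
  set A := fderiv ℝ Ψ q with hAdef
  have hA : HasFDerivAt Ψ A q := hΨD.hasFDerivAt
  set Dv := fderiv ℝ (fun r : ℝ × ℝ => v r.1 r.2) p with hDvdef
  have hDv : HasFDerivAt (fun r : ℝ × ℝ => v r.1 r.2) Dv p := hvD.hasFDerivAt
  set Du := fderiv ℝ (fun r : ℝ × ℝ => u r.1 r.2) p with hDudef
  have hDu : HasFDerivAt (fun r : ℝ × ℝ => u r.1 r.2) Du p := huD.hasFDerivAt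
  -- partial derivatives as values of the full derivatives
  have line1 : HasDerivAt (fun y : ℝ => (y, p.2)) ((1:ℝ), (0:ℝ)) p.1 :=
    (hasDerivAt_id p.1).prodMk (hasDerivAt_const p.1 p.2)
  have line2 : HasDerivAt (fun s : ℝ => (p.1, s)) ((0:ℝ), (1:ℝ)) p.2 :=
    (hasDerivAt_const p.2 p.1).prodMk (hasDerivAt_id p.2)
  have hvx : Dv (1, 0) = p.1 * u p.1 p.2 := by
    have h : HasDerivAt (fun y => v y p.2) (Dv (1, 0)) p.1 :=
      (hDv.comp_hasDerivAt p.1 line1 :)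
    rw [← h.deriv]; exact hsys1 p hp
  have hux : deriv (fun x => u x p.2) p.1 = Du (1, 0) := by
    have h : HasDerivAt (fun y => u y p.2) (Du (1, 0)) p.1 :=
      (hDu.comp_hasDerivAt p.1 line1 :)
    exact h.deriv
  have hvt : Dv (0, 1) = (p.1 / u p.1 p.2) * Du (1, 0) := by
    have h : HasDerivAt (fun s => v p.1 s) (Dv (0, 1)) p.2 :=
      (hDv.comp_hasDerivAt p.2 line2 :)
    rw [← h.deriv, hsys2 p hp, hux]
  -- components of Ψ
  have hA1 : HasFDerivAt (fun q' : ℝ × ℝ => (Ψ q').1)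
      ((ContinuousLinearMap.fst ℝ ℝ ℝ).comp A) q :=
    (ContinuousLinearMap.fst ℝ ℝ ℝ).hasFDerivAt.comp q hA
  have hA2 : HasFDerivAt (fun q' : ℝ × ℝ => (Ψ q').2)
      ((ContinuousLinearMap.snd ℝ ℝ ℝ).comp A) q :=
    (ContinuousLinearMap.snd ℝ ℝ ℝ).hasFDerivAt.comp q hA
  -- second component of A is the projection
  have hAsnd : ∀ w : ℝ × ℝ, (A w).2 = w.2 := by
    have hEq : (fun q' : ℝ × ℝ => (Ψ q').2) =ᶠ[nhds q] (fun q' : ℝ × ℝ => q'.2) :=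
      Filter.eventuallyEq_of_mem hmemD' (fun q' hq' => (hkey q' hq').2.1)
    have h2 := Filter.EventuallyEq.fderiv_eq (𝕜 := ℝ) hEq
    rw [hA2.fderiv, hasFDerivAt_snd.fderiv] at h2
    intro w
    have := congrArg (fun (L : ℝ × ℝ →L[ℝ] ℝ) => L w) h2
    simpa using this
  -- first-coordinate inverse identity
  have hVc : HasFDerivAt (fun q' : ℝ × ℝ => v (Ψ q').1 (Ψ q').2) (Dv.comp A) q := by
    exact hDv.comp q hA
  have hUc : HasFDerivAt (fun q' : ℝ × ℝ => u (Ψ q').1 (Ψ q').2) (Du.comp A) q := by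
    exact hDu.comp q hA
  have hF : HasFDerivAt (fun q' : ℝ × ℝ => v (Ψ q').1 (Ψ q').2 + 2 * (Ψ q').2)
      (Dv.comp A + (2:ℝ) • ((ContinuousLinearMap.snd ℝ ℝ ℝ).comp A)) q :=
    hVc.add (hA2.const_mul 2)
  have hAfst : ∀ w : ℝ × ℝ, Dv (A w) + 2 * (A w).2 = w.1 := by
    have hEq : (fun q' : ℝ × ℝ => v (Ψ q').1 (Ψ q').2 + 2 * (Ψ q').2)
        =ᶠ[nhds q] (fun q' : ℝ × ℝ => q'.1) :=
      Filter.eventuallyEq_of_mem hmemD' (fun q' hq' => (hkey q' hq').2.2)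
    have h2 := Filter.EventuallyEq.fderiv_eq (𝕜 := ℝ) hEq
    rw [hF.fderiv, hasFDerivAt_fst.fderiv] at h2
    intro w
    have := congrArg (fun (L : ℝ × ℝ →L[ℝ] ℝ) => L w) h2
    simpa [smul_eq_mul] using this
  -- linearity decompositions
  have hDvap : ∀ w : ℝ × ℝ, Dv w = w.1 * Dv (1, 0) + w.2 * Dv (0, 1) := by
    intro w
    have hw : w = w.1 • ((1:ℝ), (0:ℝ)) + w.2 • ((0:ℝ), (1:ℝ)) := by
      simp [Prod.ext_iff]
    conv_lhs => rw [hw]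
    rw [map_add, map_smul, map_smul, smul_eq_mul, smul_eq_mul]
  have hDuap : ∀ w : ℝ × ℝ, Du w = w.1 * Du (1, 0) + w.2 * Du (0, 1) := by
    intro w
    have hw : w = w.1 • ((1:ℝ), (0:ℝ)) + w.2 • ((0:ℝ), (1:ℝ)) := by
      simp [Prod.ext_iff]
    conv_lhs => rw [hw]
    rw [map_add, map_smul, map_smul, smul_eq_mul, smul_eq_mul]
  set a := (A (1, 0)).1 with hadef
  set b := (A (0, 1)).1 with hbdef
  have hA10 : (A (1, 0)).2 = 0 := by simpa using hAsnd (1, 0)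
  have hA01 : (A (0, 1)).2 = 1 := by simpa using hAsnd (0, 1)
  have eq1 : a * Dv (1, 0) = 1 := by
    have := hAfst (1, 0)
    rw [hDvap (A (1, 0)), hA10] at this
    simpa using this
  have eq2 : b * Dv (1, 0) + Dv (0, 1) + 2 = 0 := by
    have := hAfst (0, 1)
    rw [hDvap (A (0, 1)), hA01] at this
    simp at this
    linarith
  -- derivative of the transformed potential v'
  have hlog : HasFDerivAt (fun q' : ℝ × ℝ => Real.log (Ψ q').1)
      ((p.1)⁻¹ • ((ContinuousLinearMap.fst ℝ ℝ ℝ).comp A)) q :=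
    ((Real.hasDerivAt_log hx0).comp_hasFDerivAt q hA1 :)
  set LW : ℝ × ℝ →L[ℝ] ℝ :=
    (Dv.comp A + (2:ℝ) • ((ContinuousLinearMap.snd ℝ ℝ ℝ).comp A))
      + c • ((p.1)⁻¹ • ((ContinuousLinearMap.fst ℝ ℝ ℝ).comp A)) with hLW
  have hW : HasFDerivAt
      (fun q' : ℝ × ℝ => v (Ψ q').1 (Ψ q').2 + 2 * (Ψ q').2 + c * Real.log (Ψ q').1)
      LW q := hF.add (hlog.const_mul c)
  -- derivative of the transformed u'
  have hgq : u p.1 p.2 * p.1 ^ 2 ≠ 0 := by positivity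
  have hsq : HasFDerivAt (fun q' : ℝ × ℝ => (Ψ q').1 ^ 2)
      ((2 * p.1) • ((ContinuousLinearMap.fst ℝ ℝ ℝ).comp A)) q := by
    have h := (hasDerivAt_pow 2 p.1).comp_hasFDerivAt q hA1
    simpa [Function.comp_def] using h
  have hG : HasFDerivAt (fun q' : ℝ × ℝ => u (Ψ q').1 (Ψ q').2 * (Ψ q').1 ^ 2)
      (u p.1 p.2 • ((2 * p.1) • ((ContinuousLinearMap.fst ℝ ℝ ℝ).comp A))
        + (p.1 ^ 2) • (Du.comp A)) q := hUc.mul hsq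
  have hdivc : HasDerivAt (fun y : ℝ => c / y)
      (c * (-((u p.1 p.2 * p.1 ^ 2) ^ 2)⁻¹)) (u p.1 p.2 * p.1 ^ 2) := by
    simpa [div_eq_mul_inv] using (hasDerivAt_inv hgq).const_mul c
  set MU : ℝ × ℝ →L[ℝ] ℝ :=
    (c * (-((u p.1 p.2 * p.1 ^ 2) ^ 2)⁻¹)) •
      (u p.1 p.2 • ((2 * p.1) • ((ContinuousLinearMap.fst ℝ ℝ ℝ).comp A))
        + (p.1 ^ 2) • (Du.comp A)) with hMU
  have hcd : HasFDerivAt (fun q' : ℝ × ℝ =>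
      c / (u (Ψ q').1 (Ψ q').2 * (Ψ q').1 ^ 2)) MU q :=
    hdivc.comp_hasFDerivAt q hG
  have hUU : HasFDerivAt (fun q' : ℝ × ℝ =>
      c / (u (Ψ q').1 (Ψ q').2 * (Ψ q').1 ^ 2) + 1) MU q := hcd.add_const 1
  -- locality: lines through q stay in D'
  have hnbξ : {ξ : ℝ | (ξ, q.2) ∈ D'} ∈ nhds q.1 := by
    have hco : Continuous (fun ξ : ℝ => (ξ, q.2)) := continuous_id.prodMk continuous_const
    exact hco.continuousAt.preimage_mem_nhds (by simpa using hmemD')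
  have hnbτ : {τ : ℝ | (q.1, τ) ∈ D'} ∈ nhds q.2 := by
    have hco : Continuous (fun τ : ℝ => (q.1, τ)) := continuous_const.prodMk continuous_id
    exact hco.continuousAt.preimage_mem_nhds (by simpa using hmemD')
  have lineξ : HasDerivAt (fun ξ : ℝ => (ξ, q.2)) ((1:ℝ), (0:ℝ)) q.1 :=
    (hasDerivAt_id q.1).prodMk (hasDerivAt_const q.1 q.2)
  have lineτ : HasDerivAt (fun τ : ℝ => (q.1, τ)) ((0:ℝ), (1:ℝ)) q.2 :=
    (hasDerivAt_const q.2 q.1).prodMk (hasDerivAt_id q.2)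
  -- the three derivative computations
  have dv'ξ : deriv (fun ξ => v' ξ q.2) q.1
      = a * Dv (1, 0) + c * ((p.1)⁻¹ * a) := by
    have hEq : (fun ξ => v' ξ q.2) =ᶠ[nhds q.1]
        (fun ξ => v (Ψ (ξ, q.2)).1 (Ψ (ξ, q.2)).2 + 2 * (Ψ (ξ, q.2)).2
          + c * Real.log (Ψ (ξ, q.2)).1) :=
      Filter.eventuallyEq_of_mem hnbξ (fun ξ hξ => hv' (ξ, q.2) hξ)
    rw [hEq.deriv_eq]
    have h : HasDerivAt (fun ξ : ℝ => v (Ψ (ξ, q.2)).1 (Ψ (ξ, q.2)).2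
        + 2 * (Ψ (ξ, q.2)).2 + c * Real.log (Ψ (ξ, q.2)).1) (LW (1, 0)) q.1 :=
      (hW.comp_hasDerivAt q.1 lineξ :)
    rw [h.deriv, hLW]
    simp [hDvap (A (1, 0)), hA10, smul_eq_mul]
    rfl
  have dv'τ : deriv (fun τ => v' q.1 τ) q.2
      = (b * Dv (1, 0) + Dv (0, 1)) + 2 + c * ((p.1)⁻¹ * b) := by
    have hEq : (fun τ => v' q.1 τ) =ᶠ[nhds q.2]
        (fun τ => v (Ψ (q.1, τ)).1 (Ψ (q.1, τ)).2 + 2 * (Ψ (q.1, τ)).2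
          + c * Real.log (Ψ (q.1, τ)).1) :=
      Filter.eventuallyEq_of_mem hnbτ (fun τ hτ => hv' (q.1, τ) hτ)
    rw [hEq.deriv_eq]
    have h : HasDerivAt (fun τ : ℝ => v (Ψ (q.1, τ)).1 (Ψ (q.1, τ)).2
        + 2 * (Ψ (q.1, τ)).2 + c * Real.log (Ψ (q.1, τ)).1) (LW (0, 1)) q.2 :=
      (hW.comp_hasDerivAt q.2 lineτ :)
    rw [h.deriv, hLW]
    simp [hDvap (A (0, 1)), hA01, smul_eq_mul]
    rfl
  have du'ξ : deriv (fun ξ => u' ξ q.2) q.1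
      = (c * (-((u p.1 p.2 * p.1 ^ 2) ^ 2)⁻¹)) *
        (u p.1 p.2 * (2 * p.1 * a) + p.1 ^ 2 * (a * Du (1, 0))) := by
    have hEq : (fun ξ => u' ξ q.2) =ᶠ[nhds q.1]
        (fun ξ => c / (u (Ψ (ξ, q.2)).1 (Ψ (ξ, q.2)).2 * (Ψ (ξ, q.2)).1 ^ 2) + 1) :=
      Filter.eventuallyEq_of_mem hnbξ (fun ξ hξ => hu' (ξ, q.2) hξ)
    rw [hEq.deriv_eq]
    have h : HasDerivAt (fun ξ : ℝ =>
        c / (u (Ψ (ξ, q.2)).1 (Ψ (ξ, q.2)).2 * (Ψ (ξ, q.2)).1 ^ 2) + 1)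
        (MU (1, 0)) q.1 := (hUU.comp_hasDerivAt q.1 lineξ :)
    have hDuA : Du (A (1, 0)) = a * Du (1, 0) := by
      rw [hDuap (A (1, 0)), hA10]; ring
    rw [h.deriv, hMU]
    simp [hDuA, smul_eq_mul]
    ring
  -- solve for a and b
  have ha : a = 1 / (p.1 * u p.1 p.2) := by
    rw [hvx] at eq1
    field_simp at eq1 ⊢
    linarith
  have hb : b = -((p.1 / u p.1 p.2) * Du (1, 0) + 2) / (p.1 * u p.1 p.2) := by
    rw [hvx, hvt] at eq2
    field_simp at eq2 ⊢
    linarith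
  -- final algebra
  refine ⟨?_, ?_⟩
  · rw [dv'ξ, hu' q hq, ← hpdef, eq1, ha]
    field_simp
    ring
  · rw [dv'τ, du'ξ, hu' q hq, ← hpdef]
    have hL : (b * Dv (1, 0) + Dv (0, 1)) + 2 + c * ((p.1)⁻¹ * b)
        = c * ((p.1)⁻¹ * b) := by linarith
    rw [hL, ha, hb]
    have hcu : c / (u p.1 p.2 * p.1 ^ 2) + 1 - 1 = c / (u p.1 p.2 * p.1 ^ 2) := by ring
    rw [hcu]
    rw [div_div_eq_mul_div]
    exact stmt17_alg c p.1 (u p.1 p.2) (Du (1, 0)) hx0 hU0 hc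
end
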